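/- arXiv:2504.21471 — 5 statements merged into one kernel-verified Lean document; each statement's English description precedes it below -/
import Mathlib

section
/- Let w be a string of length n and v a string of length m+1. Then v is a minimal absent subsequence of w if and only if there exist positions 0 = i_0 < i_1 < ... < i_m < i_{m+1} = n+1 such that: (1) v = w[i_1]···w[i_m]·v[m+1]; (2) v[1] does not occur in w[1:i_1−1]; (3) for all r ∈ [2:m+1], v[r] does not occur in w[i_{r−1}+1 : i_r−1]; (4) for all r ∈ [2:m+1], v[r] occurs in w[i_{r−2}+1 : i_{r−1}]. -/
/-- The factor `w[a:b]` of `w` (1-indexed, inclusive; empty if `a > b`). -/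
def factor {α : Type*} (w : List α) (a b : ℕ) : List α := (w.take b).drop (a - 1)

/-- `v` is a minimal absent subsequence of `w`: `v` is not a subsequence of `w`, and
every proper subsequence of `v` is a subsequence of `w`. -/
def MAS {α : Type*} (w v : List α) : Prop :=
  ¬ v.Sublist w ∧ ∀ u : List α, u.Sublist v → u ≠ v → u.Sublist w

namespace MasAux
variable {α : Type*}

lemma drop_sublist_drop {l : List α} {a b : ℕ} (h : a ≤ b) :
    (l.drop b).Sublist (l.drop a) := by
  have he : l.drop b = (l.drop a).drop (b - a) := by
    rw [List.drop_drop]; congr 1; omega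
  rw [he]; exact List.drop_sublist _ _

lemma take_sublist_take {l : List α} {a b : ℕ} (h : a ≤ b) :
    (l.take a).Sublist (l.take b) := by
  have he : l.take a = (l.take b).take a := by rw [List.take_take]; congr 1; omega
  rw [he]; exact List.take_sublist _ _

lemma cons_sublist_drop {a : α} {s : List α} :
    ∀ {j : ℕ} {l : List α}, (a :: s).Sublist l → a ∉ l.take j → (a :: s).Sublist (l.drop j)
  | 0, l, h, _ => h
  | j+1, [], h, _ => by simp at h
  | j+1, b :: l', h, hm => by
    rw [List.take_succ_cons] at hm
    simp only [List.mem_cons, not_or] at hm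
    have hne : a ≠ b := hm.1
    have h' : (a :: s).Sublist l' := by
      cases h with
      | cons _ h => exact h
      | cons_cons _ h => exact absurd rfl hne
    show (a :: s).Sublist (l'.drop j)
    exact cons_sublist_drop h' hm.2

lemma tail_sublist_drop {a : α} {s l : List α} {j : ℕ} (h : (a :: s).Sublist l)
    (hj : l[j]? = some a) (hm : a ∉ l.take j) : s.Sublist (l.drop (j+1)) := by
  have h2 := cons_sublist_drop h hm
  obtain ⟨hjl, hval⟩ := List.getElem?_eq_some_iff.mp hj
  rw [List.drop_eq_getElem_cons hjl, hval] at h2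
  exact List.cons_sublist_cons.mp h2

lemma sublist_eraseIdx : ∀ {u v : List α}, u.Sublist v → u ≠ v →
    ∃ k < v.length, u.Sublist (v.eraseIdx k)
  | _, _, .slnil, hne => absurd rfl hne
  | u, b :: v, .cons _ h, _ => ⟨0, by simp, by simpa using h⟩
  | a :: u, _ :: v, .cons₂ _ h, hne => by
    have hne' : u ≠ v := fun he => hne (by rw [he])
    obtain ⟨k, hk, hs⟩ := sublist_eraseIdx h hne'
    exact ⟨k + 1, by simpa using hk, by
      rw [List.eraseIdx_cons_succ]; exact List.Sublist.cons₂ a hs⟩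

lemma mem_factor_iff {w : List α} {p q : ℕ} (hp : 1 ≤ p) {x : α} :
    x ∈ factor w p q ↔ ∃ j, p ≤ j ∧ j ≤ q ∧ w[j-1]? = some x := by
  unfold factor
  rw [List.mem_iff_getElem?]
  constructor
  · rintro ⟨k, hk⟩
    rw [List.getElem?_drop, List.getElem?_take] at hk
    split at hk
    · refine ⟨p + k, by omega, by omega, ?_⟩
      have he : p + k - 1 = p - 1 + k := by omega
      rw [he]; exact hk
    · simp at hk
  · rintro ⟨j, hpj, hjq, hj⟩
    refine ⟨j - p, ?_⟩
    rw [List.getElem?_drop, List.getElem?_take, if_pos (by omega)]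
    have he : p - 1 + (j - p) = j - 1 := by omega
    rw [he]; exact hj

lemma factor_eq_take_drop (w : List α) (p q : ℕ) :
    factor w p q = (w.drop (p - 1)).take (q - (p - 1)) := by
  unfold factor; rw [List.drop_take]

lemma take_emb {w v : List α} {f : ℕ → ℕ} {k : ℕ}
    (hmono : ∀ r, 1 ≤ r → r ≤ k → f (r-1) < f r)
    (h1 : ∀ r, 1 ≤ r → r ≤ k → w[f r - 1]? = v[r-1]?) :
    ∀ r, r ≤ k → (v.take r).Sublist (w.take (f r)) := by
  intro r
  induction r with
  | zero => intro _; simp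
  | succ r ih =>
    intro hrk
    have ih' := ih (by omega)
    have h1' := h1 (r+1) (by omega) hrk
    have hm' := hmono (r+1) (by omega) hrk
    simp only [Nat.add_sub_cancel] at h1' hm'
    have key : (v.take r ++ w[f (r+1) - 1]?.toList).Sublist (w.take ((f (r+1) - 1) + 1)) := by
      rw [List.take_succ]
      exact List.Sublist.append (ih'.trans (take_sublist_take (by omega))) (List.Sublist.refl _)
    rw [List.take_succ, ← h1']
    have he : (f (r+1) - 1) + 1 = f (r+1) := by omega
    rwa [he] at key

open Classical in
noncomputable def F (w v : List α) : ℕ → ℕ := fun r =>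
  Nat.rec 0 (fun r' p => if h : ∃ i, p < i ∧ w[i - 1]? = v[r']? then Nat.find h else w.length + 1) r

lemma F_zero (w v : List α) : F w v 0 = 0 := rfl

open Classical in
lemma F_succ (w v : List α) (r : ℕ) :
    F w v (r+1) = if h : ∃ i, F w v r < i ∧ w[i - 1]? = v[r]? then Nat.find h else w.length + 1 := rfl

open Classical in
lemma F_succ_spec {w v : List α} {r : ℕ} (hex : ∃ i, F w v r < i ∧ w[i - 1]? = v[r]?) :
    F w v r < F w v (r+1) ∧ w[F w v (r+1) - 1]? = v[r]? ∧
    ∀ i, F w v r < i → i < F w v (r+1) → w[i - 1]? ≠ v[r]? := by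
  have he : F w v (r+1) = Nat.find hex := by rw [F_succ, dif_pos hex]
  refine ⟨?_, ?_, ?_⟩
  · rw [he]; exact (Nat.find_spec hex).1
  · rw [he]; exact (Nat.find_spec hex).2
  · intro i hi1 hi2 hval
    rw [he] at hi2
    exact Nat.find_min hex hi2 ⟨hi1, hval⟩

end MasAux

/-- Characterization of minimal absent subsequences: for `|w| = n` and `|v| = m+1`,
`v` is a MAS of `w` iff there exist positions `0 = i_0 < i_1 < ... < i_m < i_{m+1} = n+1`
such that (1) `v = w[i_1] ⋯ w[i_m] · v[m+1]`; (2)–(3) `v[r]` does not occur in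
`w[i_{r-1}+1 : i_r - 1]` for all `r ∈ [1:m+1]`; (4) `v[r]` occurs in
`w[i_{r-2}+1 : i_{r-1}]` for all `r ∈ [2:m+1]`. (Positions are 1-indexed.) -/
theorem mas_characterization {α : Type*} (w v : List α) (n m : ℕ)
    (hw : w.length = n) (hv : v.length = m + 1) :
    MAS w v ↔
      ∃ f : ℕ → ℕ,
        f 0 = 0 ∧ f (m + 1) = n + 1 ∧ (∀ r ≤ m, f r < f (r + 1)) ∧
        (∀ r, 1 ≤ r → r ≤ m → w[f r - 1]? = v[r - 1]?) ∧
        (∀ r, 1 ≤ r → r ≤ m + 1 → ∀ a : α, v[r - 1]? = some a →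
          a ∉ factor w (f (r - 1) + 1) (f r - 1)) ∧
        (∀ r, 2 ≤ r → r ≤ m + 1 → ∀ a : α, v[r - 1]? = some a →
          a ∈ factor w (f (r - 2) + 1) (f (r - 1))) := by
  subst hw
  constructor
  · -- forward
    intro hmas
    have hvm : (v.take m).Sublist w := by
      apply hmas.2
      · exact List.take_sublist _ _
      · intro he
        have hl := congrArg List.length he
        rw [List.length_take, hv] at hl
        omega
    have hsome : ∀ r, (hr : r < v.length) → v[r]? = some v[r] :=
      fun r hr => List.getElem?_eq_getElem hr
    have hexstep : ∀ r, r < m →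
        (∀ s : List α, (v.take r ++ s).Sublist w → s.Sublist (w.drop (MasAux.F w v r))) →
        ∃ i, MasAux.F w v r < i ∧ w[i - 1]? = v[r]? := by
      intro r hr ihr
      have hts : v.take (r+1) = v.take r ++ [v[r]] := by
        rw [List.take_succ, List.getElem?_eq_getElem (show r < v.length by omega)]
        rfl
      have h2 : (v.take r ++ [v[r]]).Sublist w := by
        rw [← hts]
        exact (MasAux.take_sublist_take (by omega)).trans hvm
      have h3 := ihr [v[r]] h2
      rw [List.singleton_sublist, List.mem_iff_getElem?] at h3
      obtain ⟨k, hk⟩ := h3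
      rw [List.getElem?_drop] at hk
      refine ⟨MasAux.F w v r + k + 1, by omega, ?_⟩
      have e : MasAux.F w v r + k + 1 - 1 = MasAux.F w v r + k := by omega
      rw [e, hk]
      exact (hsome r (by omega)).symm
    have main : ∀ r, r ≤ m →
        ∀ s : List α, (v.take r ++ s).Sublist w → s.Sublist (w.drop (MasAux.F w v r)) := by
      intro r
      induction r with
      | zero =>
        intro _ s hs
        rw [MasAux.F_zero]
        simpa using hs
      | succ r ih =>
        intro hrk s hs
        have ihr := ih (by omega)
        have hex := hexstep r (by omega) ihr
        obtain ⟨hlt, hget, hmin⟩ := MasAux.F_succ_spec hex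
        have hvr : r < v.length := by omega
        have hts : v.take (r+1) = v.take r ++ [v[r]] := by
          rw [List.take_succ, List.getElem?_eq_getElem hvr]; rfl
        rw [hts, List.append_assoc] at hs
        have h4 := ihr ([v[r]] ++ s) hs
        rw [List.singleton_append] at h4
        have hget' : w[MasAux.F w v (r+1) - 1]? = some v[r] := by
          rw [hget]; exact hsome r (by omega)
        have hloc : (w.drop (MasAux.F w v r))[MasAux.F w v (r+1) - 1 - MasAux.F w v r]? = some v[r] := by
          rw [List.getElem?_drop]
          have e : MasAux.F w v r + (MasAux.F w v (r+1) - 1 - MasAux.F w v r)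
              = MasAux.F w v (r+1) - 1 := by omega
          rw [e]; exact hget'
        have hnm : v[r] ∉ (w.drop (MasAux.F w v r)).take (MasAux.F w v (r+1) - 1 - MasAux.F w v r) := by
          intro hmem
          rw [List.mem_iff_getElem?] at hmem
          obtain ⟨k, hk⟩ := hmem
          rw [List.getElem?_take] at hk
          by_cases hklt : k < MasAux.F w v (r+1) - 1 - MasAux.F w v r
          · rw [if_pos hklt, List.getElem?_drop] at hk
            refine hmin (MasAux.F w v r + k + 1) (by omega) (by omega) ?_
            have e : MasAux.F w v r + k + 1 - 1 = MasAux.F w v r + k := by omega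
            rw [e, hk]; exact (hsome r (by omega)).symm
          · rw [if_neg hklt] at hk; simp at hk
        have h5 := MasAux.tail_sublist_drop h4 hloc hnm
        rw [List.drop_drop] at h5
        have e3 : MasAux.F w v r + (MasAux.F w v (r+1) - 1 - MasAux.F w v r + 1)
            = MasAux.F w v (r+1) := by omega
        rwa [e3] at h5
    have hexall : ∀ r, r < m → ∃ i, MasAux.F w v r < i ∧ w[i - 1]? = v[r]? :=
      fun r hr => hexstep r hr (main r (by omega))
    have hspec : ∀ r, r < m → MasAux.F w v r < MasAux.F w v (r+1) ∧
        w[MasAux.F w v (r+1) - 1]? = v[r]? ∧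
        ∀ i, MasAux.F w v r < i → i < MasAux.F w v (r+1) → w[i - 1]? ≠ v[r]? :=
      fun r hr => MasAux.F_succ_spec (hexall r hr)
    have hmono1 : ∀ r, 1 ≤ r → r ≤ m → MasAux.F w v (r-1) < MasAux.F w v r := by
      intro r h1r hrm
      have h := (hspec (r-1) (by omega)).1
      rwa [show r - 1 + 1 = r from by omega] at h
    have h1' : ∀ r, 1 ≤ r → r ≤ m → w[MasAux.F w v r - 1]? = v[r-1]? := by
      intro r h1r hrm
      have h := (hspec (r-1) (by omega)).2.1
      rwa [show r - 1 + 1 = r from by omega] at h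
    have hle : ∀ r, r ≤ m → MasAux.F w v r ≤ w.length := by
      intro r hrm
      cases r with
      | zero => rw [MasAux.F_zero]; omega
      | succ r' =>
        have hg := h1' (r'+1) (by omega) hrm
        rw [show r' + 1 - 1 = r' from by omega, hsome r' (by omega)] at hg
        obtain ⟨hl, _⟩ := List.getElem?_eq_some_iff.mp hg
        have hlt := (hspec r' (by omega)).1
        omega
    have hT : ∀ r, r ≤ m → (v.take r).Sublist (w.take (MasAux.F w v r)) :=
      MasAux.take_emb hmono1 h1'
    have hdm : v.drop m = [v[m]] := by
      rw [List.drop_eq_getElem_cons (show m < v.length by omega)]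
      congr 1
      exact List.drop_eq_nil_of_le (by omega)
    have hfail : ¬ ∃ i, MasAux.F w v m < i ∧ w[i - 1]? = v[m]? := by
      rintro ⟨i, hi, hwi⟩
      rw [hsome m (by omega)] at hwi
      have hmem : v[m] ∈ w.drop (MasAux.F w v m) := by
        rw [List.mem_iff_getElem?]
        refine ⟨i - 1 - MasAux.F w v m, ?_⟩
        rw [List.getElem?_drop]
        have e : MasAux.F w v m + (i - 1 - MasAux.F w v m) = i - 1 := by omega
        rw [e]; exact hwi
      have h2 : (v.drop m).Sublist (w.drop (MasAux.F w v m)) := by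
        rw [hdm, List.singleton_sublist]; exact hmem
      have hsub := List.Sublist.append (hT m le_rfl) h2
      rw [List.take_append_drop, List.take_append_drop] at hsub
      exact hmas.1 hsub
    refine ⟨fun r => if r = m + 1 then w.length + 1 else MasAux.F w v r, ?_, ?_, ?_, ?_, ?_, ?_⟩ <;> beta_reduce
    · rw [if_neg (show ¬ (0 : ℕ) = m + 1 by omega)]; exact MasAux.F_zero w v
    · rw [if_pos rfl]
    · intro r hrm
      rw [if_neg (show ¬ r = m + 1 by omega)]
      by_cases hr : r = m
      · subst hr
        rw [if_pos rfl]
        have := hle r le_rfl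
        omega
      · rw [if_neg (show ¬ r + 1 = m + 1 by omega)]
        exact (hspec r (by omega)).1
    · intro r h1r hrm
      rw [if_neg (show ¬ r = m + 1 by omega)]
      exact h1' r h1r hrm
    · intro r h1r hrm a ha hmem
      rw [if_neg (show ¬ r - 1 = m + 1 by omega)] at hmem
      by_cases hr : r = m + 1
      · subst hr
        rw [if_pos rfl] at hmem
        simp only [Nat.add_sub_cancel] at hmem ha
        rw [MasAux.mem_factor_iff (by omega)] at hmem
        obtain ⟨j, hj1, hj2, hj3⟩ := hmem
        exact hfail ⟨j, by omega, by rw [hj3]; exact ha.symm⟩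
      · rw [if_neg hr] at hmem
        rw [MasAux.mem_factor_iff (by omega)] at hmem
        obtain ⟨j, hj1, hj2, hj3⟩ := hmem
        have hs := hspec (r-1) (by omega)
        rw [show r - 1 + 1 = r from by omega] at hs
        have h11 := hs.1
        exact hs.2.2 j (by omega) (by omega) (by rw [hj3]; exact ha.symm)
    · intro r h2r hrm a ha
      obtain ⟨k, rfl⟩ : ∃ k, r = k + 2 := ⟨r - 2, by omega⟩
      have hkm : k + 1 ≤ m := by omega
      simp only [show k + 2 - 2 = k from by omega, show k + 2 - 1 = k + 1 from by omega] at ha ⊢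
      rw [if_neg (show ¬ k = m + 1 by omega), if_neg (show ¬ k + 1 = m + 1 by omega)]
      have hak : a = v[k+1] := by
        rw [hsome (k+1) (by omega)] at ha
        exact (Option.some_inj.mp ha).symm
      subst hak
      by_contra hno
      have herase : (v.eraseIdx k).Sublist w := by
        apply hmas.2
        · exact List.eraseIdx_sublist v k
        · intro he
          have hl := congrArg List.length he
          rw [List.length_eraseIdx, if_pos (by omega)] at hl
          omega
      rw [List.eraseIdx_eq_take_drop_succ] at herase
      have hdrop := main k (by omega) (v.drop (k+1)) herase
      have hdk : v.drop (k+1) = v[k+1] :: v.drop (k+2) :=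
        List.drop_eq_getElem_cons (by omega)
      have hno' : v[k+1] ∉ (w.drop (MasAux.F w v k)).take (MasAux.F w v (k+1) - MasAux.F w v k) := by
        intro hmem
        apply hno
        rw [MasAux.factor_eq_take_drop]
        have e : MasAux.F w v k + 1 - 1 = MasAux.F w v k := by omega
        rw [e]
        exact hmem
      rw [hdk] at hdrop
      have h6 := MasAux.cons_sublist_drop hdrop hno'
      rw [List.drop_drop] at h6
      have hlt := (hspec k (by omega)).1
      have e2 : MasAux.F w v k + (MasAux.F w v (k+1) - MasAux.F w v k) = MasAux.F w v (k+1) := by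
        omega
      rw [e2, ← hdk] at h6
      have hsub := List.Sublist.append (hT (k+1) hkm) h6
      rw [List.take_append_drop, List.take_append_drop] at hsub
      exact hmas.1 hsub
  · -- backward
    rintro ⟨f, h0, hn1, hmono, h1, h23, h4⟩
    have hmono2 : ∀ a b, a < b → b ≤ m + 1 → f a < f b := by
      intro a b hab hbm
      induction b with
      | zero => omega
      | succ b ih =>
        rcases Nat.lt_or_ge a b with h | h
        · exact (ih (by omega) (by omega)).trans (hmono b (by omega))
        · have he : a = b := by omega
          subst he
          exact hmono a (by omega)
    have hsome : ∀ r, (hr : r < v.length) → v[r]? = some v[r] :=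
      fun r hr => List.getElem?_eq_getElem hr
    have hT : ∀ r, r ≤ m → (v.take r).Sublist (w.take (f r)) := by
      apply MasAux.take_emb
      · intro r h1r hrm
        exact hmono2 (r-1) r (by omega) (by omega)
      · intro r h1r hrm
        exact h1 r h1r hrm
    have hD : ∀ d k, k + d = m → (v.drop (k+1)).Sublist (w.drop (f k)) := by
      intro d
      induction d with
      | zero =>
        intro k hk
        have he : v.drop (k+1) = [] := List.drop_eq_nil_of_le (by omega)
        rw [he]; exact List.nil_sublist _
      | succ d ih =>
        intro k hk
        have ih' := ih (k+1) (by omega)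
        have hmem := h4 (k+2) (by omega) (by omega) v[k+1] (by
          rw [show k + 2 - 1 = k + 1 from by omega]
          exact hsome (k+1) (by omega))
        rw [show k + 2 - 2 = k from by omega, show k + 2 - 1 = k + 1 from by omega] at hmem
        rw [MasAux.mem_factor_iff (by omega)] at hmem
        obtain ⟨q, hq1, hq2, hq3⟩ := hmem
        obtain ⟨hql, hqv⟩ := List.getElem?_eq_some_iff.mp hq3
        have hdq : w.drop (q-1) = v[k+1] :: w.drop q := by
          rw [List.drop_eq_getElem_cons hql, hqv, show q - 1 + 1 = q from by omega]
        have hdk : v.drop (k+1) = v[k+1] :: v.drop (k+2) :=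
          List.drop_eq_getElem_cons (by omega)
        have step : (v[k+1] :: v.drop (k+2)).Sublist (w.drop (q-1)) := by
          rw [hdq]
          exact List.cons_sublist_cons.mpr (ih'.trans (MasAux.drop_sublist_drop hq2))
        rw [hdk]
        exact step.trans (MasAux.drop_sublist_drop (by omega))
    have hA : ∀ d r, r + d = m → ¬ (v.drop r).Sublist (w.drop (f r)) := by
      intro d
      induction d with
      | zero =>
        intro r hr hc
        have hrm : r = m := by omega
        subst hrm
        have hdm : v.drop r = [v[r]] := by
          rw [List.drop_eq_getElem_cons (show r < v.length by omega)]
          congr 1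
          exact List.drop_eq_nil_of_le (by omega)
        rw [hdm, List.singleton_sublist] at hc
        have hno := h23 (r+1) (by omega) (by omega) v[r] (by
          rw [show r + 1 - 1 = r from by omega]
          exact hsome r (by omega))
        apply hno
        rw [show r + 1 - 1 = r from by omega, hn1]
        rw [show w.length + 1 - 1 = w.length from by omega]
        unfold factor
        rw [List.take_length]
        rw [show f r + 1 - 1 = f r from by omega]
        exact hc
      | succ d ih =>
        intro r hr hc
        have ihr := ih (r+1) (by omega)
        have hr1 : r + 1 ≤ m := by omega
        have hdr : v.drop r = v[r] :: v.drop (r+1) :=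
          List.drop_eq_getElem_cons (by omega)
        rw [hdr] at hc
        have hmlt := hmono r (by omega)
        have hw1 : w[f (r+1) - 1]? = some v[r] := by
          rw [h1 (r+1) (by omega) hr1, show r + 1 - 1 = r from by omega]
          exact hsome r (by omega)
        have hloc : (w.drop (f r))[f (r+1) - 1 - f r]? = some v[r] := by
          rw [List.getElem?_drop]
          rw [show f r + (f (r+1) - 1 - f r) = f (r+1) - 1 from by omega]
          exact hw1
        have hnm : v[r] ∉ (w.drop (f r)).take (f (r+1) - 1 - f r) := by
          have hno := h23 (r+1) (by omega) (by omega) v[r] (by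
            rw [show r + 1 - 1 = r from by omega]
            exact hsome r (by omega))
          rw [show r + 1 - 1 = r from by omega] at hno
          rw [MasAux.factor_eq_take_drop] at hno
          rw [show f r + 1 - 1 = f r from by omega] at hno
          exact hno
        have h5 := MasAux.tail_sublist_drop hc hloc hnm
        rw [List.drop_drop] at h5
        rw [show f r + (f (r+1) - 1 - f r + 1) = f (r+1) from by omega] at h5
        exact ihr h5
    constructor
    · have hA0 := hA m 0 (by omega)
      rw [h0] at hA0
      simpa using hA0
    · intro u hu hne
      obtain ⟨k, hk, hue⟩ := MasAux.sublist_eraseIdx hu hne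
      have hkm : k ≤ m := by omega
      refine hue.trans ?_
      rw [List.eraseIdx_eq_take_drop_succ]
      have hs := List.Sublist.append (hT k hkm) (hD (m - k) k (by omega))
      rwa [List.take_append_drop] at hs
end

section
/- If v is a MAS-prefix of w, then there exists a minimal absent subsequence u of w having v as a prefix. Concretely, if ℓ is the number of occurrences of v's last letter v[m] in w strictly to the right of the last position i_m of the canonical embedding of v, then v·v[m]^(ℓ+1) is a minimal absent subsequence of w. -/
/-- `f` (restricted to `[0:|v|]`, with `f 0 = 0`) is the canonical (greedy leftmost)
embedding of `v` in `w`: positions are 1-indexed, strictly increasing, `w[f r] = v[r]`,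
and `v[r]` does not occur strictly between positions `f (r-1)` and `f r`. -/
def CanonEmb {α : Type*} (w v : List α) (f : ℕ → ℕ) : Prop :=
  f 0 = 0 ∧
  (∀ r, 1 ≤ r → r ≤ v.length →
    f (r - 1) < f r ∧ f r ≤ w.length ∧ w[f r - 1]? = v[r - 1]?) ∧
  (∀ r, 1 ≤ r → r ≤ v.length → ∀ j, f (r - 1) < j → j < f r → w[j - 1]? ≠ v[r - 1]?)

/-- `v` is an MAS-prefix of `w` with canonical embedding `f`: additionally, `v[r]`
occurs in `w[f(r-2)+1 : f(r-1)]` for all `r ∈ [2:|v|]`. -/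
def MASPrefix {α : Type*} (w v : List α) (f : ℕ → ℕ) : Prop :=
  CanonEmb w v f ∧
  ∀ r, 2 ≤ r → r ≤ v.length → ∀ a : α, v[r - 1]? = some a →
    a ∈ factor w (f (r - 2) + 1) (f (r - 1))

private lemma drop_split' {α : Type*} (L : List α) {i j : ℕ} (h : i ≤ j) :
    L.drop i = (L.take j).drop i ++ L.drop j := by
  rw [List.drop_take]
  conv_lhs => rw [← List.take_append_drop (j - i) (L.drop i)]
  rw [List.drop_drop, Nat.add_sub_cancel' h]

private lemma sublist_eraseIdx_of_proper {α : Type*} {l' l : List α}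
    (h : l'.Sublist l) (hne : l' ≠ l) : ∃ i < l.length, l'.Sublist (l.eraseIdx i) := by
  induction h with
  | slnil => exact absurd rfl hne
  | @cons l₁ l₂ b h ih => exact ⟨0, by simp, by simpa using h⟩
  | @cons_cons l₁ l₂ b h ih =>
      have hne' : l₁ ≠ l₂ := fun he => hne (by rw [he])
      obtain ⟨i, hi, hs⟩ := ih hne'
      exact ⟨i + 1, by simpa using Nat.succ_lt_succ hi, by simpa using hs.cons₂ b⟩


/-- If `v` is an MAS-prefix of `w`, then there is a minimal absent subsequence of `w`
having `v` as a prefix; concretely, if `a = v[m]` is the last letter of `v` and `ℓ` is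
the number of occurrences of `a` in `w` strictly to the right of the last position
`f m` of the canonical embedding of `v`, then `v · a^(ℓ+1)` is a MAS of `w`. -/
theorem masPrefix_extension {α : Type*} [DecidableEq α] (w v : List α) (f : ℕ → ℕ)
    (m : ℕ) (hm : v.length = m) (hm1 : 1 ≤ m)
    (hpre : MASPrefix w v f) (a : α) (ha : v.getLast? = some a) :
    MAS w (v ++ List.replicate ((w.drop (f m)).count a + 1) a) ∧
      ∃ u : List α, v <+: u ∧ MAS w u := by
  obtain ⟨⟨hf0, hstep, hgap⟩, hocc⟩ := hpre
  rw [hm] at hstep hgap hocc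
  set ℓ := (w.drop (f m)).count a with hℓ
  -- monotonicity of f on [0, m]
  have hmono : ∀ i j, i ≤ j → j ≤ m → f i ≤ f j := by
    intro i j hij hjm
    induction j with
    | zero => have : i = 0 := by omega
              rw [this]
    | succ j ih =>
        rcases Nat.lt_or_ge i (j + 1) with h | h
        · have h1 : f i ≤ f j := ih (by omega) (by omega)
          have h2 : f j < f (j + 1) := by
            have := (hstep (j + 1) (by omega) hjm).1
            simpa using this
          omega
        · have : i = j + 1 := by omega
          rw [this]
  -- Lemma A: prefix embedding
  have hA : ∀ r, r ≤ m → (v.take r).Sublist (w.take (f r)) := by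
    intro r
    induction r with
    | zero => intro _; rw [hf0]; simp
    | succ r ih =>
        intro hr
        obtain ⟨h1, h2, h3⟩ := hstep (r + 1) (by omega) hr
        simp only [Nat.add_sub_cancel] at h1 h3
        have hfr1 : 1 ≤ f (r + 1) := by omega
        rw [List.take_succ]
        have hwt : w.take (f (r + 1)) = w.take (f (r + 1) - 1) ++ (w[f (r + 1) - 1]?).toList := by
          conv_lhs => rw [show f (r + 1) = (f (r + 1) - 1) + 1 by omega]
          rw [List.take_succ]
        rw [hwt, h3]
        refine List.Sublist.append ?_ (List.Sublist.refl _)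
        refine (ih (by omega)).trans ?_
        have : w.take (f r) = (w.take (f (r + 1) - 1)).take (f r) := by
          rw [List.take_take, Nat.min_eq_left (by omega)]
        rw [this]
        exact List.take_sublist _ _
  -- Lemma B: shifted suffix embedding
  have hBaux : ∀ d s, 1 ≤ s → s + d = m →
      (v.drop s).Sublist ((w.take (f (m - 1))).drop (f (s - 1))) := by
    intro d
    induction d with
    | zero =>
        intro s h1 h2
        have : v.drop s = [] := List.drop_eq_nil_of_le (by omega)
        rw [this]; exact List.nil_sublist _
    | succ d ih =>
        intro s h1 h2
        have hsv : s < v.length := by omega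
        rw [List.drop_eq_getElem_cons hsv]
        have hocc' := hocc (s + 1) (by omega) (by omega) v[s]
          (by simp only [Nat.add_sub_cancel]; exact List.getElem?_eq_getElem hsv)
        unfold factor at hocc'
        simp only [Nat.add_sub_cancel, Nat.succ_sub_succ] at hocc'
        -- hocc' : v[s] ∈ (w.take (f s)).drop (f (s - 1))
        have hsm1 : f s ≤ f (m - 1) := hmono s (m - 1) (by omega) (by omega)
        have hsplit : (w.take (f (m - 1))).drop (f (s - 1)) =
            (w.take (f s)).drop (f (s - 1)) ++ (w.take (f (m - 1))).drop (f s) := by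
          have h := drop_split' (w.take (f (m - 1)))
            (i := f (s - 1)) (j := f s) (hmono (s - 1) s (by omega) (by omega))
          rwa [List.take_take, Nat.min_eq_left hsm1] at h
        rw [hsplit]
        have hx : [v[s]].Sublist ((w.take (f s)).drop (f (s - 1))) :=
          List.singleton_sublist.mpr hocc'
        have hy := ih (s + 1) (by omega) (by omega)
        simp only [Nat.add_sub_cancel] at hy
        simpa using hx.append hy
  have hB : ∀ s, 1 ≤ s → s ≤ m →
      (v.drop s).Sublist ((w.take (f (m - 1))).drop (f (s - 1))) :=
    fun s h1 h2 => hBaux (m - s) s h1 (by omega)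
  -- minimality of the greedy embedding
  have hmin : ∀ r, r ≤ m → ∀ k, (v.take r).Sublist (w.take k) → f r ≤ k := by
    intro r
    induction r with
    | zero => intro _ k _; omega
    | succ r ih =>
        intro hr k hsub
        rw [List.take_succ] at hsub
        have hrv : r < v.length := by omega
        rw [show v[r]?.toList = [v[r]] by rw [List.getElem?_eq_getElem hrv]; rfl] at hsub
        obtain ⟨r₁, r₂, heq, h1, h2⟩ := List.append_sublist_iff.mp hsub
        obtain ⟨s, t, hst⟩ := List.mem_iff_append.mp (List.singleton_sublist.mp h2)
        have hwk : w.take k = (r₁ ++ s) ++ v[r] :: t := by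
          rw [heq, hst, List.append_assoc]
        have hps : (r₁ ++ s).length = r₁.length + s.length := List.length_append
        have hlen1 : (r₁ ++ s).length + 1 ≤ k := by
          have hc := congrArg List.length hwk
          simp only [List.length_take, List.length_append, List.length_cons] at hc
          omega
        have hy : (r₁ ++ s) = w.take (r₁ ++ s).length := by
          have hpre1 : (r₁ ++ s) <+: w.take k := ⟨v[r] :: t, hwk.symm⟩
          exact List.prefix_iff_eq_take.mp (hpre1.trans (List.take_prefix k w))
        have hfr : f r ≤ (r₁ ++ s).length := by
          apply ih (by omega)
          rw [← hy]
          exact h1.trans (List.sublist_append_left r₁ s)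
        have hwp : w[(r₁ ++ s).length]? = some v[r] := by
          have hq : (w.take k)[(r₁ ++ s).length]? = some v[r] := by
            rw [hwk, List.getElem?_append_right (le_refl _)]
            simp
          rwa [List.getElem?_take, if_pos (by omega)] at hq
        by_contra hlt
        push_neg at hlt
        have hgap' := hgap (r + 1) (by omega) hr ((r₁ ++ s).length + 1)
        simp only [Nat.add_sub_cancel] at hgap'
        exact hgap' (by omega) (by omega) (by rw [hwp, List.getElem?_eq_getElem hrv])
  -- basic facts
  have hfmw : f m ≤ w.length := (hstep m hm1 le_rfl).2.1
  have hfm1 : f (m - 1) < f m := by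
    have := (hstep m hm1 le_rfl).1; exact this
  have hwa : w[f m - 1]? = some a := by
    have h3 := (hstep m hm1 le_rfl).2.2
    rw [h3, ← hm]
    rw [← List.getLast?_eq_getElem?]
    exact ha
  have hv_sub : v.Sublist (w.take (f m)) := by
    have := hA m le_rfl
    rwa [show v.take m = v by rw [← hm, List.take_length]] at this
  -- count bound after f (m-1)
  have hcount1 : ℓ + 1 ≤ (w.drop (f (m - 1))).count a := by
    rw [drop_split' w (le_of_lt hfm1), List.count_append]
    have hmem : a ∈ (w.take (f m)).drop (f (m - 1)) := by
      have hg : ((w.take (f m)).drop (f (m - 1)))[f m - 1 - f (m - 1)]? = some a := by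
        rw [List.getElem?_drop, show f (m - 1) + (f m - 1 - f (m - 1)) = f m - 1 by omega,
          List.getElem?_take, if_pos (by omega)]
        exact hwa
      exact List.mem_of_getElem? hg
    have := List.count_pos_iff.mpr hmem
    omega
  have hrep1 : (List.replicate (ℓ + 1) a).Sublist (w.drop (f (m - 1))) :=
    List.replicate_sublist_iff.mpr hcount1
  -- Part 1: not a sublist
  have hnot : ¬ (v ++ List.replicate (ℓ + 1) a).Sublist w := by
    intro hsub
    obtain ⟨r₁, r₂, heq, h1, h2⟩ := List.append_sublist_iff.mp hsub
    have hr1 : r₁ = w.take r₁.length :=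
      List.prefix_iff_eq_take.mp ⟨r₂, heq.symm⟩
    have hfm : f m ≤ r₁.length := by
      apply hmin m le_rfl
      rw [← hr1, show v.take m = v by rw [← hm, List.take_length]]
      exact h1
    have hr2 : r₂.Sublist (w.drop (f m)) := by
      have hd : r₂ = w.drop r₁.length := by
        have := List.drop_left (l₁ := r₁) (l₂ := r₂)
        rw [← heq] at this
        exact this.symm
      rw [hd, show r₁.length = f m + (r₁.length - f m) by omega, ← List.drop_drop]
      exact List.drop_sublist _ _
    have := List.replicate_sublist_iff.mp (h2.trans hr2)
    omega
  -- Part 2: every eraseIdx is a sublist of w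
  have heri : ∀ i, i < (v ++ List.replicate (ℓ + 1) a).length →
      ((v ++ List.replicate (ℓ + 1) a).eraseIdx i).Sublist w := by
    intro i hi
    rw [List.length_append, hm, List.length_replicate] at hi
    rcases Nat.lt_or_ge i m with hlt | hge
    · -- delete inside v
      rw [List.eraseIdx_append_of_lt_length (by omega), List.eraseIdx_eq_take_drop_succ]
      have hBpart : (v.drop (i + 1)).Sublist ((w.take (f (m - 1))).drop (f i)) := by
        have := hB (i + 1) (by omega) (by omega)
        simpa only [Nat.add_sub_cancel] using this
      have hbig := (hA i (by omega)).append (hBpart.append hrep1)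
      have hw_split : w.take (f i) ++ ((w.take (f (m - 1))).drop (f i) ++ w.drop (f (m - 1)))
          = w := by
        rw [← drop_split' w (hmono i (m - 1) (by omega) (by omega)), List.take_append_drop]
      rw [List.append_assoc]
      rw [← hw_split]
      exact hbig
    · -- delete one of the trailing a's
      rw [List.eraseIdx_append_of_length_le (by omega)]
      have hrw : (List.replicate (ℓ + 1) a).eraseIdx (i - v.length) = List.replicate ℓ a := by
        obtain ⟨n, hn, hrepeq⟩ := List.sublist_replicate_iff.mp
          (List.eraseIdx_sublist (List.replicate (ℓ + 1) a) (i - v.length))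
        have hc := congrArg List.length hrepeq
        rw [List.length_eraseIdx, List.length_replicate, if_pos (by omega),
          List.length_replicate] at hc
        rw [hrepeq, show n = ℓ by omega]
      rw [hrw]
      have h2 : (List.replicate ℓ a).Sublist (w.drop (f m)) :=
        List.replicate_sublist_iff.mpr le_rfl
      have := hv_sub.append h2
      rwa [List.take_append_drop] at this
  have hmas : MAS w (v ++ List.replicate (ℓ + 1) a) := by
    refine ⟨hnot, ?_⟩
    intro u hu hne
    obtain ⟨i, hi, hs⟩ := sublist_eraseIdx_of_proper hu hne
    exact hs.trans (heri i hi)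
  exact ⟨hmas, ⟨_, List.prefix_append v _, hmas⟩⟩
end

section
/- For a string w of length n, a position i ∈ [n], and a = w[i], the string a^k, where k = |w[1:i]|_a is the number of occurrences of a in the prefix w[1:i], is an MAS-prefix of w whose canonical embedding ends on position i. -/
private lemma count_take_succ {α : Type*} [DecidableEq α] (w : List α) (a : α) (j : ℕ) :
    (w.take (j+1)).count a = (w.take j).count a + if w[j]? = some a then 1 else 0 := by
  rw [List.take_succ, List.count_append]
  congr 1
  cases h : w[j]? with
  | none => simp
  | some b =>
    simp only [Option.toList_some, List.count_singleton']
    by_cases hb : b = a <;> simp [hb, h]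

private lemma count_take_mono {α : Type*} [DecidableEq α] (w : List α) (a : α) {j j' : ℕ}
    (h : j ≤ j') : (w.take j).count a ≤ (w.take j').count a :=
  ((List.take_prefix_take_left (l := w) h).sublist.count_le _)

private lemma find_props {α : Type*} [DecidableEq α] (w : List α) (a : α) {r : ℕ} (hr : 1 ≤ r)
    (hex : ∃ j, r ≤ (w.take j).count a) :
    1 ≤ Nat.find hex ∧ (w.take (Nat.find hex)).count a = r ∧
    (w.take (Nat.find hex - 1)).count a = r - 1 ∧ w[Nat.find hex - 1]? = some a := by
  set p := Nat.find hex with hp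
  have hspec : r ≤ (w.take p).count a := Nat.find_spec hex
  have hp1 : 1 ≤ p := by
    rcases Nat.eq_zero_or_pos p with h0 | h1
    · rw [h0] at hspec; simp at hspec; omega
    · exact h1
  have hmin : (w.take (p - 1)).count a < r := by
    have := Nat.find_min hex (m := p - 1) (by omega)
    omega
  have hstep := count_take_succ w a (p - 1)
  rw [show p - 1 + 1 = p by omega] at hstep
  by_cases hw : w[p - 1]? = some a
  · rw [if_pos hw] at hstep
    exact ⟨hp1, by omega, by omega, hw⟩
  · rw [if_neg hw] at hstep; omega

private lemma mem_of_getElem?_eq {α : Type*} {l : List α} {n : ℕ} {a : α}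
    (h : l[n]? = some a) : a ∈ l := List.mem_of_getElem? h

/-- For a string `w` of length `n`, a position `i ∈ [n]` and `a = w[i]`, the string
`a^k` with `k = |w[1:i]|_a` is an MAS-prefix of `w` whose canonical embedding ends
on position `i`. -/
theorem replicate_count_masPrefix {α : Type*} [DecidableEq α] (w : List α) (i : ℕ)
    (a : α) (hi1 : 1 ≤ i) (hin : i ≤ w.length) (ha : w[i - 1]? = some a) :
    ∃ f : ℕ → ℕ, MASPrefix w (List.replicate ((w.take i).count a) a) f ∧
      f ((w.take i).count a) = i := by
  classical
  set k := (w.take i).count a with hk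
  set f : ℕ → ℕ := fun r => if h : ∃ j, r ≤ (w.take j).count a then Nat.find h else 0 with hf
  -- basic facts
  have hci : (w.take (i-1)).count a + 1 = k := by
    have := count_take_succ w a (i - 1)
    rw [show i - 1 + 1 = i by omega, if_pos ha] at this
    omega
  have hk1 : 1 ≤ k := by omega
  have hf0 : f 0 = 0 := by
    have hex0 : ∃ j, 0 ≤ (w.take j).count a := ⟨0, Nat.zero_le _⟩
    rw [hf]
    simp only [dif_pos hex0]
    exact Nat.le_zero.mp (Nat.find_le (Nat.zero_le _))
  have hfr : ∀ r, 1 ≤ r → r ≤ k →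
      1 ≤ f r ∧ (w.take (f r)).count a = r ∧ (w.take (f r - 1)).count a = r - 1 ∧
      w[f r - 1]? = some a ∧ (∀ j, j < f r → (w.take j).count a < r) := by
    intro r hr hrk
    have hex : ∃ j, r ≤ (w.take j).count a := ⟨i, hrk⟩
    have hfeq : f r = Nat.find hex := dif_pos hex
    obtain ⟨h1, h2, h3, h4⟩ := find_props w a hr hex
    rw [hfeq]
    refine ⟨h1, h2, h3, h4, ?_⟩
    intro j hj
    have := Nat.find_min hex hj
    omega
  -- f (r-1) count value
  have hprev : ∀ r, 1 ≤ r → r ≤ k → (w.take (f (r-1))).count a = r - 1 ∧ f (r-1) ≤ f r - 1 := by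
    intro r hr hrk
    obtain ⟨h1, h2, h3, h4, h5⟩ := hfr r hr hrk
    rcases Nat.eq_or_lt_of_le hr with h | h
    · rw [← h]
      simp [hf0]
    · obtain ⟨g1, g2, g3, g4, g5⟩ := hfr (r-1) (by omega) (by omega)
      refine ⟨g2, ?_⟩
      by_contra hc
      have := g5 (f r - 1) (by omega)
      omega
  have hlen : ∀ r, 1 ≤ r → r ≤ k → f r ≤ w.length := by
    intro r hr hrk
    obtain ⟨h1, _, _, h4, _⟩ := hfr r hr hrk
    have : f r - 1 < w.length := by
      by_contra hc
      rw [List.getElem?_eq_none (by omega)] at h4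
      cases h4
    omega
  have hvlen : (List.replicate k a).length = k := List.length_replicate
  have hvget : ∀ r, 1 ≤ r → r ≤ k → (List.replicate k a)[r-1]? = some a := by
    intro r hr hrk
    simp [List.getElem?_replicate]
    omega
  refine ⟨f, ⟨⟨hf0, ?_, ?_⟩, ?_⟩, ?_⟩
  · -- embedding conditions
    intro r hr hrk
    rw [hvlen] at hrk
    obtain ⟨h1, h2, h3, h4, h5⟩ := hfr r hr hrk
    obtain ⟨p1, p2⟩ := hprev r hr hrk
    exact ⟨by omega, hlen r hr hrk, by rw [h4, hvget r hr hrk]⟩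
  · -- leftmost
    intro r hr hrk j hj1 hj2 hcon
    rw [hvlen] at hrk
    rw [hvget r hr hrk] at hcon
    obtain ⟨h1, h2, h3, h4, h5⟩ := hfr r hr hrk
    obtain ⟨p1, p2⟩ := hprev r hr hrk
    -- w[j-1] = a with f(r-1) < j < f r gives count (take j) ≥ r, contradiction
    have hstep := count_take_succ w a (j - 1)
    have hj1' : 1 ≤ j := by omega
    rw [show j - 1 + 1 = j by omega, if_pos hcon] at hstep
    have hmono : (w.take (f (r-1))).count a ≤ (w.take (j-1)).count a :=
      count_take_mono w a (by omega)
    have := h5 j hj2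
    omega
  · -- MAS condition
    intro r hr hrk b hb
    rw [hvlen] at hrk
    have hb' : b = a := by
      rw [hvget r (by omega) hrk] at hb
      exact (Option.some_injective _ hb).symm
    subst hb'
    set s := r - 1 with hs
    have hs1 : 1 ≤ s := by omega
    have hsk : s ≤ k := by omega
    obtain ⟨h1, h2, h3, h4, h5⟩ := hfr s hs1 hsk
    obtain ⟨p1, p2⟩ := hprev s hs1 hsk
    rw [show r - 2 = s - 1 by omega]
    unfold factor
    rw [show f (s-1) + 1 - 1 = f (s-1) by omega]
    refine mem_of_getElem?_eq (n := f s - 1 - f (s - 1)) ?_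
    rw [List.getElem?_drop, show f (s-1) + (f s - 1 - f (s-1)) = f s - 1 by omega,
      List.getElem?_take, if_pos (show f s - 1 < f s by omega)]
    exact h4
  · -- endpoint
    obtain ⟨h1, h2, h3, h4, h5⟩ := hfr k hk1 le_rfl
    have hle : f k ≤ i := by
      by_contra hc
      have := h5 i (by omega)
      omega
    have hgt : ¬ f k ≤ i - 1 := by
      intro hc
      have := count_take_mono w a (j := f k) (j' := i - 1) hc
      omega
    omega
end

section
/- Let w be a string with universality index ι(w) = k and arch factorization w = ar_1 ··· ar_k · r. If v is a shortest absent subsequence of w (so |v| = k+1) and i_1 < ... < i_k is the canonical embedding of v[1:k] in w, then i_ℓ lies in the ℓ-th arch ar_ℓ for every ℓ ∈ [k], and v[k+1] does not occur in w[i_k+1 : |w|]. -/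
/-- Any word `u` whose letters all occur in every block of `L`, with `|u| ≤ |L|`,
is a subsequence of `L.flatten` (greedily: one letter per block). -/
lemma sublist_flatten_of_mem_blocks {α : Type*} :
    ∀ (L : List (List α)) (u : List α), u.length ≤ L.length →
    (∀ a ∈ u, ∀ ar ∈ L, a ∈ ar) → u.Sublist L.flatten := by
  intro L
  induction L with
  | nil =>
    intro u h _
    rw [List.length_eq_zero_iff.mp (Nat.le_zero.mp h)]
    simp
  | cons ar L ih =>
    intro u hlen hmem
    cases u with
    | nil => exact List.nil_sublist _
    | cons b u' =>
      have hb : b ∈ ar := hmem b (by simp) ar (by simp)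
      have h2 : u'.Sublist L.flatten := ih u' (by simpa using hlen)
        (fun a ha ar' h => hmem a (by simp [ha]) ar' (by simp [h]))
      have h3 := List.Sublist.append (List.singleton_sublist.mpr hb) h2
      simpa using h3

/-- Let `w = ar_1 ⋯ ar_k · rest` be the arch factorization of `w` (each arch contains
every letter of `alph(w)`, its last letter occurs exactly once in it, and `alph(rest)`
misses some letter of `w`), with `k = ι(w)` arches. If `v` is a shortest absent
subsequence of `w` (so `|v| = k+1`) and `f` is the canonical embedding of `v[1:k]`
in `w`, then `f ℓ` lies in the `ℓ`-th arch for every `ℓ ∈ [k]`, and `v[k+1]` does not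
occur in `w[f k + 1 : |w|]`. -/
theorem sas_embedding_in_arches {α : Type*} [DecidableEq α] (w v : List α)
    (arches : List (List α)) (rest : List α) (k : ℕ)
    (hk : arches.length = k)
    (hw : w = arches.flatten ++ rest)
    (harch : ∀ ar ∈ arches, (∀ a ∈ w, a ∈ ar) ∧
      ∃ h : ar ≠ [], ar.count (ar.getLast h) = 1)
    (hrest : ∃ a ∈ w, a ∉ rest)
    (hv : ∀ a ∈ v, a ∈ w) (habs : ¬ v.Sublist w)
    (hmin : ∀ v' : List α, (∀ a ∈ v', a ∈ w) → ¬ v'.Sublist w → v.length ≤ v'.length)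
    (hvlen : v.length = k + 1)
    (f : ℕ → ℕ) (hf : CanonEmb w (v.take k) f) :
    (∀ ℓ, 1 ≤ ℓ → ℓ ≤ k →
      ((arches.take (ℓ - 1)).flatten.length < f ℓ ∧ f ℓ ≤ (arches.take ℓ).flatten.length)) ∧
    (∀ a : α, v[k]? = some a → a ∉ w.drop (f k)) := by
  obtain ⟨hf0, hf1, hf2⟩ := hf
  have hvtk : (v.take k).length = k := by simp [hvlen]
  -- decomposition of `w` at arch boundary `m`
  have hsplit : ∀ m, w = (arches.take m).flatten ++ ((arches.drop m).flatten ++ rest) := by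
    intro m
    conv_lhs => rw [hw, ← List.take_append_drop m arches]
    rw [List.flatten_append, List.append_assoc]
  have hwtake : ∀ m, w.take ((arches.take m).flatten.length) = (arches.take m).flatten := by
    intro m
    conv_lhs => rw [hsplit m]
    exact List.take_left
  -- the canonical embedding really embeds prefixes
  have emb : ∀ m, m ≤ k → (v.take m).Sublist (w.take (f m)) := by
    intro m
    induction m with
    | zero => intro _; simp [hf0]
    | succ m ih =>
      intro hm
      have ihm := ih (by omega)
      obtain ⟨h1, h2, h3⟩ := hf1 (m + 1) (by omega) (by rw [hvtk]; omega)
      simp only [Nat.add_sub_cancel] at h1 h3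
      have hvm : (v.take k)[m]? = v[m]? := by
        rw [List.getElem?_take, if_pos (by omega : m < k)]
      rw [hvm] at h3
      have hn1 : f m ≤ f (m + 1) - 1 := by omega
      have hmono : (w.take (f m)).Sublist (w.take (f (m + 1) - 1)) := by
        have heq : w.take (f m) = (w.take (f (m + 1) - 1)).take (f m) := by
          rw [List.take_take, min_eq_left hn1]
        rw [heq]; exact List.take_sublist _ _
      have htail : w.take (f (m + 1)) = w.take (f (m + 1) - 1) ++ (w[f (m + 1) - 1]?).toList := by
        have heq : f (m + 1) = (f (m + 1) - 1) + 1 := by omega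
        conv_lhs => rw [heq]
        exact List.take_succ
      rw [List.take_succ, htail, h3]
      exact List.Sublist.append (ihm.trans hmono) (List.Sublist.refl _)
  -- upper bound: `f m` stays within the first `m` arches
  have ub : ∀ m, m ≤ k → f m ≤ (arches.take m).flatten.length := by
    intro m
    induction m with
    | zero => intro _; simp [hf0]
    | succ m ih =>
      intro hm
      have ihm := ih (by omega)
      by_contra hcon
      push_neg at hcon
      have hmv : m < v.length := by omega
      have hcw : v[m] ∈ w := hv _ (List.getElem_mem hmv)
      have hmk : m < arches.length := by omega
      have harchm := (harch arches[m] (List.getElem_mem hmk)).1 v[m] hcw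
      obtain ⟨i, hi, hic⟩ := List.getElem_of_mem harchm
      have hdecomp : w = (arches.take m).flatten ++
          (arches[m] ++ ((arches.drop (m + 1)).flatten ++ rest)) := by
        rw [hsplit m, List.drop_eq_getElem_cons hmk]
        simp only [List.flatten_cons, List.append_assoc]
      have hwj : w[(arches.take m).flatten.length + i]? = some v[m] := by
        rw [hdecomp, List.getElem?_append_right (by omega)]
        simp only [Nat.add_sub_cancel_left]
        rw [List.getElem?_append_left hi, List.getElem?_eq_getElem hi, hic]
      have hB1 : (arches.take (m + 1)).flatten.length =
          (arches.take m).flatten.length + arches[m].length := by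
        rw [List.take_succ, List.getElem?_eq_getElem hmk]
        simp only [Option.toList_some, List.flatten_append, List.flatten_cons,
          List.flatten_nil, List.append_nil, List.length_append]
      have hne := hf2 (m + 1) (by omega) (by rw [hvtk]; omega)
        ((arches.take m).flatten.length + i + 1)
        (by simp only [Nat.add_sub_cancel]; omega) (by omega)
      simp only [Nat.add_sub_cancel] at hne
      have hvmk : (v.take k)[m]? = some v[m] := by
        rw [List.getElem?_take, if_pos (by omega : m < k), List.getElem?_eq_getElem hmv]
      exact hne (hwj.trans hvmk.symm)
  refine ⟨?_, ?_⟩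
  · intro ℓ h1ℓ hℓk
    obtain ⟨m, rfl⟩ : ∃ m, ℓ = m + 1 := ⟨ℓ - 1, by omega⟩
    simp only [Nat.add_sub_cancel]
    refine ⟨?_, ub (m + 1) hℓk⟩
    -- lower bound: otherwise `v` would be a subsequence of `w`
    by_contra hcon
    push_neg at hcon
    have h1 : (v.take (m + 1)).Sublist ((arches.take m).flatten) := by
      have hsub := emb (m + 1) hℓk
      have h2 : (w.take (f (m + 1))).Sublist
          (w.take ((arches.take m).flatten.length)) := by
        have heq : w.take (f (m + 1)) =
            (w.take ((arches.take m).flatten.length)).take (f (m + 1)) := by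
          rw [List.take_take, min_eq_left hcon]
        rw [heq]; exact List.take_sublist _ _
      rw [hwtake m] at h2
      exact hsub.trans h2
    have h3 : (v.drop (m + 1)).Sublist ((arches.drop m).flatten) := by
      apply sublist_flatten_of_mem_blocks
      · simp only [List.length_drop, hvlen, hk]; omega
      · intro a ha ar har
        exact (harch ar (List.mem_of_mem_drop har)).1 a (hv a (List.mem_of_mem_drop ha))
    have hvw : v.Sublist w := by
      rw [hsplit m]
      have := h1.append (h3.trans (List.sublist_append_left _ rest))
      simpa [List.take_append_drop] using this
    exact habs hvw
  · intro a ha hmem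
    have h1 : (v.take k).Sublist (w.take (f k)) := emb k le_rfl
    have hlt : k < v.length := by omega
    have hdk : v.drop k = [a] := by
      rw [List.drop_eq_getElem_cons hlt]
      have hva : v[k] = a := by
        rw [List.getElem?_eq_getElem hlt] at ha
        exact Option.some.inj ha
      rw [hva, List.drop_eq_nil_of_le (by omega)]
    have hvw : v.Sublist w := by
      rw [← List.take_append_drop k v, hdk, ← List.take_append_drop (f k) w]
      exact h1.append (List.singleton_sublist.mpr hmem)
    exact habs hvw
end

section
/- For n ≥ 1, the string w = 1^n·2·1·2^n over the alphabet {1,2} has 1^(n+1)·2^(n+1) as a minimal absent subsequence; in particular w has a minimal absent subsequence of length 2n+2, which is strictly longer than the minimal absent subsequence c^(ℓ+1) obtained from the most frequent letter c (which has length n+3). -/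
/-- For `n ≥ 1`, the string `w = 1^n · 2 · 1 · 2^n` has `1^(n+1) · 2^(n+1)` as a
minimal absent subsequence of length `2n+2`, which is strictly longer than the MAS
`c^(|w|_c + 1)` obtained from any (in particular, the most frequent) letter `c`. -/
theorem example_long_mas (n : ℕ) (hn : 1 ≤ n) :
    MAS (List.replicate n 1 ++ [2, 1] ++ List.replicate n (2 : ℕ))
        (List.replicate (n + 1) 1 ++ List.replicate (n + 1) (2 : ℕ)) ∧
    (List.replicate (n + 1) 1 ++ List.replicate (n + 1) (2 : ℕ)).length = 2 * n + 2 ∧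
    ∀ c : ℕ,
      (List.replicate n 1 ++ [2, 1] ++ List.replicate n (2 : ℕ)).count c + 1
        < 2 * n + 2 := by
  refine ⟨⟨?_, ?_⟩, ?_, ?_⟩
  · intro h
    have hlen : (List.replicate (n+1) 1 ++ List.replicate (n+1) (2:ℕ)).length
        = (List.replicate n 1 ++ [2, 1] ++ List.replicate n (2:ℕ)).length := by
      simp; omega
    have heq := h.eq_of_length hlen
    rw [List.replicate_succ' (n := n) (a := 1), List.append_assoc, List.append_assoc] at heq
    have := List.append_cancel_left heq
    simp [List.replicate_succ] at this
  · intro u hu hne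
    rw [List.sublist_append_iff] at hu
    obtain ⟨u1, u2, rfl, h1, h2⟩ := hu
    rw [List.sublist_replicate_iff] at h1 h2
    obtain ⟨a, ha, rfl⟩ := h1
    obtain ⟨b, hb, rfl⟩ := h2
    have hab : a ≤ n ∨ b ≤ n := by
      by_contra hc
      push_neg at hc
      have ha' : a = n + 1 := by omega
      have hb' : b = n + 1 := by omega
      exact hne (by rw [ha', hb'])
    rcases hab with hab | hab
    · -- 1^a <+ 1^n, 2^b <+ [2,1] ++ 2^n
      rw [List.append_assoc]
      refine List.Sublist.append ?_ ?_
      · exact (List.sublist_replicate_iff).2 ⟨a, hab, rfl⟩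
      · have h2' : (List.replicate b (2:ℕ)).Sublist (List.replicate (n+1) 2) :=
          (List.sublist_replicate_iff).2 ⟨b, hb, rfl⟩
        refine h2'.trans ?_
        rw [List.replicate_succ]
        show ((2:ℕ) :: List.replicate n 2).Sublist ([2, 1] ++ List.replicate n 2)
        exact (List.cons_sublist_cons).2 (List.sublist_cons_self _ _)
    · -- 1^a <+ 1^n ++ [2,1], 2^b <+ 2^n
      refine List.Sublist.append ?_ ?_
      · have h1' : (List.replicate a (1:ℕ)).Sublist (List.replicate (n+1) 1) :=
          (List.sublist_replicate_iff).2 ⟨a, ha, rfl⟩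
        refine h1'.trans ?_
        rw [List.replicate_succ' (n := n) (a := 1)]
        refine List.Sublist.append (List.Sublist.refl _) ?_
        simp
      · exact (List.sublist_replicate_iff).2 ⟨b, hab, rfl⟩
  · simp; omega
  · intro c
    rcases eq_or_ne c 1 with rfl | h1
    · simp [List.count_append, List.count_replicate, List.count_cons]; omega
    · rcases eq_or_ne c 2 with rfl | h2
      · simp [List.count_append, List.count_replicate, List.count_cons]; omega
      · simp [List.count_append, List.count_replicate, List.count_cons, h1, h2, Ne.symm h1, Ne.symm h2]
end
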